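/- Let λ_v be a nonzero vector in three-dimensional Euclidean space, λ_m a real number, and m, c, T positive reals, ε ∈ (0,1]. Define S = 1 − λ_m − (c/m)·‖λ_v‖, α* = −λ_v/‖λ_v‖, and u* = min(max((ε − S)/(2ε), 0), 1). Then the function F(α, u) = (u·T/m)·⟨λ_v, α⟩ − λ_m·(u·T/c) + (T/c)·(u − ε·u·(1 − u)), over the set of pairs (α, u) with ‖α‖ = 1 and u ∈ [0,1], attains its minimum at (α*, u*); that is, F(α*, u*) ≤ F(α, u) for all unit vectors α and all u ∈ [0,1]. -/
import Mathlib


open RealInnerProductSpace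

lemma quad_clamp (ε s u : ℝ) (hε : 0 < ε) (hu0 : 0 ≤ u) (hu1 : u ≤ 1) :
    ε * (min (max ((ε - s) / (2 * ε)) 0) 1)^2 + (s - ε) * (min (max ((ε - s) / (2 * ε)) 0) 1)
      ≤ ε * u^2 + (s - ε) * u := by
  set w : ℝ := (ε - s) / (2 * ε) with hw
  have hs : s - ε = -2 * ε * w := by
    rw [hw]; field_simp; ring
  rcases le_total w 0 with h0 | h0
  · rw [max_eq_right h0, min_eq_left (by norm_num : (0:ℝ) ≤ 1)]
    nlinarith [mul_nonneg (mul_nonneg hε.le hu0) (show (0:ℝ) ≤ u - 2*w by linarith)]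
  · rcases le_total 1 w with h1 | h1
    · rw [max_eq_left h0, min_eq_right h1]
      nlinarith [mul_nonneg (mul_nonneg hε.le (show (0:ℝ) ≤ 1 - u by linarith)) (show (0:ℝ) ≤ 2*w - u - 1 by linarith)]
    · rw [max_eq_left h0, min_eq_left h1]
      nlinarith [sq_nonneg (u - w)]

/-- The control-dependent part of the Hamiltonian
`F(α,u) = (uT/m)⟪λv,α⟫ - λm (uT/c) + (T/c)(u - εu(1-u))` attains its minimum
over unit vectors `α` and throttles `u ∈ [0,1]` at `α* = -λv/‖λv‖` and
`u* = min (max ((ε - S)/(2ε)) 0) 1`, where `S = 1 - λm - (c/m)‖λv‖`. -/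
theorem stmt4 (lv : EuclideanSpace ℝ (Fin 3)) (hlv : lv ≠ 0) (lm m c T ε : ℝ)
    (hm : 0 < m) (hc : 0 < c) (hT : 0 < T) (hε : ε ∈ Set.Ioc (0 : ℝ) 1) :
    ∀ α : EuclideanSpace ℝ (Fin 3), ‖α‖ = 1 → ∀ u ∈ Set.Icc (0 : ℝ) 1,
      (min (max ((ε - (1 - lm - (c / m) * ‖lv‖)) / (2 * ε)) 0) 1 * T / m)
          * ⟪lv, (-‖lv‖⁻¹) • lv⟫
        - lm * (min (max ((ε - (1 - lm - (c / m) * ‖lv‖)) / (2 * ε)) 0) 1 * T / c)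
        + (T / c) * (min (max ((ε - (1 - lm - (c / m) * ‖lv‖)) / (2 * ε)) 0) 1
            - ε * min (max ((ε - (1 - lm - (c / m) * ‖lv‖)) / (2 * ε)) 0) 1
              * (1 - min (max ((ε - (1 - lm - (c / m) * ‖lv‖)) / (2 * ε)) 0) 1))
      ≤ (u * T / m) * ⟪lv, α⟫ - lm * (u * T / c) + (T / c) * (u - ε * u * (1 - u)) := by
  intro α hα u hu
  obtain ⟨hu0, hu1⟩ := hu
  obtain ⟨hε0, hε1⟩ := hε
  have hn : (0:ℝ) < ‖lv‖ := norm_pos_iff.mpr hlv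
  set s : ℝ := 1 - lm - (c / m) * ‖lv‖ with hsdef
  set v : ℝ := min (max ((ε - s) / (2 * ε)) 0) 1 with hvdef
  have hv0 : 0 ≤ v := le_min (le_max_right _ _) (by norm_num)
  have hv1 : v ≤ 1 := min_le_right _ _
  have hip : ⟪lv, (-‖lv‖⁻¹) • lv⟫ = -‖lv‖ := by
    rw [real_inner_smul_right, real_inner_self_eq_norm_sq]
    field_simp
  have hcs : -‖lv‖ ≤ ⟪lv, α⟫ := by
    have h := abs_real_inner_le_norm lv α
    rw [hα, mul_one] at h
    linarith [neg_abs_le (⟪lv, α⟫ : ℝ)]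
  have key := quad_clamp ε s u hε0 hu0 hu1
  rw [← hvdef] at key
  have hg : ∀ x : ℝ, (x * T / m) * (-‖lv‖) - lm * (x * T / c)
      + (T / c) * (x - ε * x * (1 - x)) = (T / c) * (ε * x^2 + (s - ε) * x) := by
    intro x
    rw [hsdef]
    field_simp
    ring
  have hmid : (v * T / m) * (-‖lv‖) - lm * (v * T / c)
      + (T / c) * (v - ε * v * (1 - v))
      ≤ (u * T / m) * (-‖lv‖) - lm * (u * T / c)
      + (T / c) * (u - ε * u * (1 - u)) := by
    rw [hg v, hg u]
    exact mul_le_mul_of_nonneg_left key (by positivity)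
  rw [hip]
  refine hmid.trans ?_
  have hcoef : 0 ≤ u * T / m := by positivity
  nlinarith [mul_le_mul_of_nonneg_left hcs hcoef]
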